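/- arXiv:2603.05625 — 4 statements merged into one kernel-verified Lean document; each statement's English description precedes it below -/
import Mathlib

section
/- Let d ≥ 1, let M ∈ ℝ^{d×d} be an invertible matrix, let C ∈ ℝ^{d×d} be symmetric positive definite, let c > 0, and let α ∈ ℝ^d satisfy αᵀCα = c². Then there exists a symmetric positive definite matrix W ∈ ℝ^{d×d} such that for every β ∈ ℝ^d with βᵀCβ ≤ c² one has βᵀMᵀWMβ ≤ αᵀMᵀWMα; that is, α is an optimal repulsive attack for the attacker with knowledge M, capability (C, c), and objective W. -/
open Matrix

namespace Matrix

variable {n K : Type*} [Fintype n] [DecidableEq n]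

theorem transpose_mul_mul_same_of_nonsing_inv [CommRing K] {M : Matrix n n K} (hM : IsUnit M)
    (C : Matrix n n K) : Mᵀ * (M⁻¹ᵀ * C * M⁻¹) * M = C := by
  have hinv : M⁻¹ * M = 1 := nonsing_inv_mul _ ((isUnit_iff_isUnit_det _).mp hM)
  have hinvT : Mᵀ * M⁻¹ᵀ = 1 := by rw [← transpose_mul, hinv, transpose_one]
  calc Mᵀ * (M⁻¹ᵀ * C * M⁻¹) * M = (Mᵀ * M⁻¹ᵀ) * C * (M⁻¹ * M) := by
        simp only [Matrix.mul_assoc]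
    _ = C := by rw [hinvT, hinv, Matrix.one_mul, Matrix.mul_one]

theorem PosDef.transpose_nonsing_inv_mul_mul_nonsing_inv [Field K] [PartialOrder K] [StarRing K]
    [TrivialStar K] {C M : Matrix n n K} (hC : C.PosDef) (hM : IsUnit M) :
    (M⁻¹ᵀ * C * M⁻¹).PosDef := by
  simpa only [conjTranspose_eq_transpose_of_trivial] using
    hC.conjTranspose_mul_mul_same (mulVec_injective_iff_isUnit.mpr (isUnit_nonsing_inv_iff.mpr hM))

end Matrix

theorem exists_objective_realizing_attack_general
    (d : ℕ)
    (M : Matrix (Fin d) (Fin d) ℝ) (hM : IsUnit M)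
    (C : Matrix (Fin d) (Fin d) ℝ) (hC : C.PosDef)
    (c : ℝ)
    (α : Fin d → ℝ) (hα : α ⬝ᵥ C.mulVec α = c ^ 2) :
    ∃ W : Matrix (Fin d) (Fin d) ℝ, W.PosDef ∧
      ∀ β : Fin d → ℝ, β ⬝ᵥ C.mulVec β ≤ c ^ 2 →
        β ⬝ᵥ (Mᵀ * W * M).mulVec β ≤ α ⬝ᵥ (Mᵀ * W * M).mulVec α := by
  -- With `W = M⁻ᵀ C M⁻¹` the objective `MᵀWM` is the constraint matrix `C` itself.
  refine ⟨M⁻¹ᵀ * C * M⁻¹, hC.transpose_nonsing_inv_mul_mul_nonsing_inv hM, fun β hβ => ?_⟩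
  rwa [transpose_mul_mul_same_of_nonsing_inv hM, hα]

/-- Theorem 3.2, part 1: non-identifiability of the objective.
For any invertible model `M`, capability `(C, c)` with `C` symmetric positive definite and
`c > 0`, and any attack `α` on the constraint boundary (`αᵀCα = c²`), there exists a symmetric
positive definite objective matrix `W` such that `α` is an optimal repulsive attack:
`βᵀMᵀWMβ ≤ αᵀMᵀWMα` for every feasible `β` (i.e. `βᵀCβ ≤ c²`). -/
theorem exists_objective_realizing_attack
    (d : ℕ) (hd : 1 ≤ d)
    (M : Matrix (Fin d) (Fin d) ℝ) (hM : IsUnit M)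
    (C : Matrix (Fin d) (Fin d) ℝ) (hC : C.PosDef)
    (c : ℝ) (hc : 0 < c)
    (α : Fin d → ℝ) (hα : α ⬝ᵥ C.mulVec α = c ^ 2) :
    ∃ W : Matrix (Fin d) (Fin d) ℝ, W.PosDef ∧
      ∀ β : Fin d → ℝ, β ⬝ᵥ C.mulVec β ≤ c ^ 2 →
        β ⬝ᵥ (Mᵀ * W * M).mulVec β ≤ α ⬝ᵥ (Mᵀ * W * M).mulVec α :=
  exists_objective_realizing_attack_general d M hM C hC c α hα
end

section
/- Let d ≥ 1, let C, W ∈ ℝ^{d×d} be symmetric positive definite, let c > 0, and let α ∈ ℝ^d satisfy αᵀCα = c². Then there exists an invertible matrix M ∈ ℝ^{d×d} such that for every β ∈ ℝ^d with βᵀCβ ≤ c² one has βᵀMᵀWMβ ≤ αᵀMᵀWMα; that is, α is an optimal repulsive attack for the attacker with knowledge M, capability (C, c), and objective W. -/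
/-!
Any two positive definite matrices are congruent: writing `C = Bᴴ B` and `W = Sᴴ S` with `B`, `S`
invertible, the knowledge `M = S⁻¹ B` satisfies `Mᵀ W M = C`. For this `M` the attacker's objective
is the constraint form itself, which `α` maximises on the feasible set because it lies on its
boundary.
-/

open Matrix
open scoped MatrixOrder ComplexOrder

namespace Matrix

variable {n 𝕜 : Type*} [Fintype n] [DecidableEq n] [RCLike 𝕜]

theorem PosDef.exists_isUnit_eq_conjTranspose_mul_self {A : Matrix n n 𝕜} (hA : A.PosDef) :
    ∃ B : Matrix n n 𝕜, IsUnit B ∧ A = Bᴴ * B :=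
  open scoped Matrix.Norms.L2Operator in
  CStarAlgebra.isStrictlyPositive_iff_eq_star_mul_self.mp hA.isStrictlyPositive

theorem PosDef.exists_isUnit_conjTranspose_mul_mul_eq {A W : Matrix n n 𝕜} (hA : A.PosDef)
    (hW : W.PosDef) : ∃ M : Matrix n n 𝕜, IsUnit M ∧ Mᴴ * W * M = A := by
  obtain ⟨B, hB, rfl⟩ := hA.exists_isUnit_eq_conjTranspose_mul_self
  obtain ⟨S, hS, rfl⟩ := hW.exists_isUnit_eq_conjTranspose_mul_self
  have hSdet : IsUnit S.det := (isUnit_iff_isUnit_det S).mp hS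
  refine ⟨S⁻¹ * B, (isUnit_nonsing_inv_iff.mpr hS).mul hB, ?_⟩
  calc (S⁻¹ * B)ᴴ * (Sᴴ * S) * (S⁻¹ * B)
      = Bᴴ * (S * S⁻¹)ᴴ * (S * S⁻¹) * B := by
        simp only [conjTranspose_mul, conjTranspose_nonsing_inv, mul_assoc]
    _ = Bᴴ * B := by simp [mul_nonsing_inv S hSdet]

end Matrix

theorem exists_knowledge_realizing_attack_general
    (d : ℕ)
    (C W : Matrix (Fin d) (Fin d) ℝ) (hC : C.PosDef) (hW : W.PosDef)
    (c : ℝ)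
    (α : Fin d → ℝ) (hα : α ⬝ᵥ C.mulVec α = c ^ 2) :
    ∃ M : Matrix (Fin d) (Fin d) ℝ, IsUnit M ∧
      ∀ β : Fin d → ℝ, β ⬝ᵥ C.mulVec β ≤ c ^ 2 →
        β ⬝ᵥ (Mᵀ * W * M).mulVec β ≤ α ⬝ᵥ (Mᵀ * W * M).mulVec α := by
  obtain ⟨M, hM, hMWM⟩ := hC.exists_isUnit_conjTranspose_mul_mul_eq hW
  rw [conjTranspose_eq_transpose_of_trivial] at hMWM
  refine ⟨M, hM, fun β hβ => ?_⟩
  rw [hMWM]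
  exact hβ.trans_eq hα.symm

/-- Theorem 3.2, part 3: non-identifiability of the knowledge.
For any symmetric positive definite `C, W`, any `c > 0`, and any attack `α` on the
constraint boundary (`αᵀCα = c²`), there exists an invertible knowledge matrix `M` such
that `α` is an optimal repulsive attack: `βᵀMᵀWMβ ≤ αᵀMᵀWMα` for every feasible `β`
(i.e. `βᵀCβ ≤ c²`). -/
theorem exists_knowledge_realizing_attack
    (d : ℕ) (hd : 1 ≤ d)
    (C W : Matrix (Fin d) (Fin d) ℝ) (hC : C.PosDef) (hW : W.PosDef)
    (c : ℝ) (hc : 0 < c)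
    (α : Fin d → ℝ) (hα : α ⬝ᵥ C.mulVec α = c ^ 2) :
    ∃ M : Matrix (Fin d) (Fin d) ℝ, IsUnit M ∧
      ∀ β : Fin d → ℝ, β ⬝ᵥ C.mulVec β ≤ c ^ 2 →
        β ⬝ᵥ (Mᵀ * W * M).mulVec β ≤ α ⬝ᵥ (Mᵀ * W * M).mulVec α :=
  exists_knowledge_realizing_attack_general d C W hC hW c α hα
end

section
/- Let d ≥ 1, let M, G ∈ ℝ^{d×d} be invertible, let u ∈ ℝ^d with ‖u‖₂ = 1, let ε ∈ (0,1), and let c > 0. Define A := uuᵀ + ε(I_d − uuᵀ), V := A G M^{-1}, and W := VᵀV. Then W is symmetric positive definite, and the vector α := c G^{-1} u satisfies αᵀ(GᵀG)α = c², and for every β ∈ ℝ^d with βᵀ(GᵀG)β ≤ c² one has βᵀMᵀWMβ ≤ αᵀMᵀWMα, with equality if and only if β = α or β = −α. -/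
/-!
Substituting `y = G β` turns the constraint into `‖y‖² ≤ c²` and the objective into
`‖A y‖² = (1 - ε²) ⟪u, y⟫² + ε² ‖y‖²`, since `MᵀWM = (AG)ᵀ(AG)`. By Cauchy–Schwarz this is at
most `‖y‖² ≤ c²`, with equality exactly when `y` is parallel to `u` and `‖y‖ = c`, that is
`y = ±c u = ±G α`. Positive definiteness of `W = VᵀV` only needs `V` invertible, and `A` is
invertible because it fixes `u` and scales `u^⊥` by `ε ≠ 0`.
-/

open Matrix

/-- The Euclidean (ℓ₂) norm of a vector in `ℝ^d`. -/
noncomputable def euclNorm {d : ℕ} (x : Fin d → ℝ) : ℝ := Real.sqrt (x ⬝ᵥ x)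

variable {ι R : Type*} [Fintype ι]

theorem dotProduct_transpose_mul_self_mulVec [CommRing R] (B : Matrix ι ι R) (x : ι → R) :
    x ⬝ᵥ (Bᵀ * B) *ᵥ x = (B *ᵥ x) ⬝ᵥ (B *ᵥ x) := by
  rw [← mulVec_mulVec, dotProduct_mulVec, vecMul_transpose]

section CauchySchwarz

variable [Field R] {u : ι → R}

theorem dotProduct_self_sub_proj (hu : u ⬝ᵥ u = 1) (y : ι → R) :
    (y - (u ⬝ᵥ y) • u) ⬝ᵥ (y - (u ⬝ᵥ y) • u) = y ⬝ᵥ y - (u ⬝ᵥ y) ^ 2 := by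
  simp only [dotProduct_sub, sub_dotProduct, dotProduct_smul, smul_dotProduct, smul_eq_mul,
    dotProduct_comm y u, hu]
  ring

variable [LinearOrder R] [IsStrictOrderedRing R]

theorem sq_dotProduct_le_dotProduct_self (hu : u ⬝ᵥ u = 1) (y : ι → R) :
    (u ⬝ᵥ y) ^ 2 ≤ y ⬝ᵥ y :=
  sub_nonneg.1 <| dotProduct_self_sub_proj hu y ▸ Finset.sum_nonneg fun _ _ ↦ mul_self_nonneg _

theorem sq_dotProduct_eq_dotProduct_self_iff (hu : u ⬝ᵥ u = 1) (y : ι → R) :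
    (u ⬝ᵥ y) ^ 2 = y ⬝ᵥ y ↔ y = (u ⬝ᵥ y) • u := by
  rw [← sub_eq_zero (a := y), ← dotProduct_self_eq_zero, dotProduct_self_sub_proj hu, sub_eq_zero,
    eq_comm]

end CauchySchwarz

def scaleOrthogonal [CommRing R] [DecidableEq ι] (u : ι → R) (ε : R) : Matrix ι ι R :=
  vecMulVec u u + ε • (1 - vecMulVec u u)

section ScaleOrthogonal

variable [DecidableEq ι]

theorem scaleOrthogonal_mulVec [CommRing R] (u : ι → R) (ε : R) (y : ι → R) :
    scaleOrthogonal u ε *ᵥ y = ((1 - ε) * (u ⬝ᵥ y)) • u + ε • y := by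
  have hproj : vecMulVec u u *ᵥ y = (u ⬝ᵥ y) • u := by
    rw [vecMulVec_mulVec, dotProduct_comm, op_smul_eq_smul]
  rw [scaleOrthogonal, add_mulVec, smul_mulVec, sub_mulVec, one_mulVec, hproj]
  module

variable {u : ι → R}

theorem dotProduct_scaleOrthogonal_mulVec [CommRing R] (hu : u ⬝ᵥ u = 1) (ε : R) (y : ι → R) :
    u ⬝ᵥ scaleOrthogonal u ε *ᵥ y = u ⬝ᵥ y := by
  rw [scaleOrthogonal_mulVec, dotProduct_add, dotProduct_smul, dotProduct_smul, hu, smul_eq_mul,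
    smul_eq_mul]
  ring

theorem scaleOrthogonal_mulVec_dotProduct_self [CommRing R] (hu : u ⬝ᵥ u = 1) (ε : R)
    (y : ι → R) :
    (scaleOrthogonal u ε *ᵥ y) ⬝ᵥ (scaleOrthogonal u ε *ᵥ y) =
      (1 - ε ^ 2) * (u ⬝ᵥ y) ^ 2 + ε ^ 2 * (y ⬝ᵥ y) := by
  simp only [scaleOrthogonal_mulVec, dotProduct_add, add_dotProduct, dotProduct_smul,
    smul_dotProduct, smul_eq_mul, dotProduct_comm y u, hu]
  ring

theorem isUnit_scaleOrthogonal [Field R] (hu : u ⬝ᵥ u = 1) {ε : R} (hε : ε ≠ 0) :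
    IsUnit (scaleOrthogonal u ε) := by
  refine mulVec_injective_iff_isUnit.1 <| (injective_iff_map_eq_zero (mulVecLin _)).2 fun y hy ↦ ?_
  have hy : scaleOrthogonal u ε *ᵥ y = 0 := hy
  have hperp : u ⬝ᵥ y = 0 := by
    rw [← dotProduct_scaleOrthogonal_mulVec hu ε, hy, dotProduct_zero]
  rw [scaleOrthogonal_mulVec, hperp, mul_zero, zero_smul, zero_add] at hy
  exact (smul_eq_zero.1 hy).resolve_left hε

variable [Field R] [LinearOrder R] [IsStrictOrderedRing R] {ε : R}

theorem scaleOrthogonal_mulVec_dotProduct_self_le (hu : u ⬝ᵥ u = 1) (hε : ε ^ 2 ≤ 1)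
    (y : ι → R) :
    (scaleOrthogonal u ε *ᵥ y) ⬝ᵥ (scaleOrthogonal u ε *ᵥ y) ≤ y ⬝ᵥ y := by
  rw [scaleOrthogonal_mulVec_dotProduct_self hu]
  nlinarith [sq_dotProduct_le_dotProduct_self hu y]

theorem scaleOrthogonal_mulVec_dotProduct_self_eq_iff (hu : u ⬝ᵥ u = 1) (hε : ε ^ 2 < 1)
    (y : ι → R) :
    (scaleOrthogonal u ε *ᵥ y) ⬝ᵥ (scaleOrthogonal u ε *ᵥ y) = y ⬝ᵥ y ↔ y = (u ⬝ᵥ y) • u := by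
  rw [scaleOrthogonal_mulVec_dotProduct_self hu, ← sq_dotProduct_eq_dotProduct_self_iff hu]
  constructor
  · intro h
    have h' : (1 - ε ^ 2) * ((u ⬝ᵥ y) ^ 2 - y ⬝ᵥ y) = 0 := by linear_combination h
    exact sub_eq_zero.1 <| (mul_eq_zero.1 h').resolve_left (sub_ne_zero.2 hε.ne')
  · intro h
    rw [h]
    ring

theorem scaleOrthogonal_mulVec_dotProduct_self_le_sq (hu : u ⬝ᵥ u = 1) (hε : ε ^ 2 < 1)
    {c : R} {y : ι → R} (hy : y ⬝ᵥ y ≤ c ^ 2) :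
    (scaleOrthogonal u ε *ᵥ y) ⬝ᵥ (scaleOrthogonal u ε *ᵥ y) ≤ c ^ 2 ∧
      ((scaleOrthogonal u ε *ᵥ y) ⬝ᵥ (scaleOrthogonal u ε *ᵥ y) = c ^ 2 ↔
        y = c • u ∨ y = -(c • u)) := by
  have hle := scaleOrthogonal_mulVec_dotProduct_self_le hu hε.le y
  refine ⟨hle.trans hy, ⟨fun h ↦ ?_, ?_⟩⟩
  · have hnorm : y ⬝ᵥ y = c ^ 2 := le_antisymm hy (h ▸ hle)
    have hpar := (scaleOrthogonal_mulVec_dotProduct_self_eq_iff hu hε y).1 (h.trans hnorm.symm)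
    have hsq : (u ⬝ᵥ y) ^ 2 = c ^ 2 := by
      rw [← hnorm, (sq_dotProduct_eq_dotProduct_self_iff hu y).2 hpar]
    rcases sq_eq_sq_iff_eq_or_eq_neg.1 hsq with hs | hs
    · exact .inl (hs ▸ hpar)
    · exact .inr (by rw [hpar, hs, neg_smul])
  · rintro (rfl | rfl) <;>
      simp only [scaleOrthogonal_mulVec_dotProduct_self hu, dotProduct_neg, neg_dotProduct,
        dotProduct_smul, smul_dotProduct, smul_eq_mul, hu] <;> ring

end ScaleOrthogonal

theorem dotProduct_self_eq_one_of_euclNorm_eq_one {d : ℕ} {u : Fin d → ℝ} (hu : euclNorm u = 1) :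
    u ⬝ᵥ u = 1 := by
  rwa [euclNorm, Real.sqrt_eq_one] at hu

theorem objective_construction_general
    (d : ℕ)
    (M G : Matrix (Fin d) (Fin d) ℝ) (hM : IsUnit M) (hG : IsUnit G)
    (u : Fin d → ℝ) (hu : euclNorm u = 1)
    (ε : ℝ) (hε0 : 0 < ε) (hε1 : ε < 1)
    (c : ℝ)
    (A V W : Matrix (Fin d) (Fin d) ℝ)
    (hA : A = vecMulVec u u + ε • ((1 : Matrix (Fin d) (Fin d) ℝ) - vecMulVec u u))
    (hV : V = A * G * M⁻¹)
    (hW : W = Vᵀ * V)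
    (α : Fin d → ℝ) (hα : α = c • G⁻¹.mulVec u) :
    W.PosDef ∧
    α ⬝ᵥ (Gᵀ * G).mulVec α = c ^ 2 ∧
    ∀ β : Fin d → ℝ, β ⬝ᵥ (Gᵀ * G).mulVec β ≤ c ^ 2 →
      β ⬝ᵥ (Mᵀ * W * M).mulVec β ≤ α ⬝ᵥ (Mᵀ * W * M).mulVec α ∧
      (β ⬝ᵥ (Mᵀ * W * M).mulVec β = α ⬝ᵥ (Mᵀ * W * M).mulVec α ↔ β = α ∨ β = -α) := by
  replace hu := dotProduct_self_eq_one_of_euclNorm_eq_one hu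
  obtain rfl : A = scaleOrthogonal u ε := hA
  have hV_unit : IsUnit V := hV ▸ ((isUnit_scaleOrthogonal hu hε0.ne').mul hG).mul
    (isUnit_nonsing_inv_iff.2 hM)
  have hVM : V * M = scaleOrthogonal u ε * G :=
    hV ▸ nonsing_inv_mul_cancel_right _ _ ((isUnit_iff_isUnit_det M).1 hM)
  have hobj : Mᵀ * W * M = (V * M)ᵀ * (V * M) := by
    simp only [hW, transpose_mul, Matrix.mul_assoc]
  have hGα : G *ᵥ α = c • u := by
    rw [hα, mulVec_smul, mulVec_mulVec, mul_nonsing_inv G ((isUnit_iff_isUnit_det G).1 hG),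
      one_mulVec]
  have hG_inj : Function.Injective G.mulVec := mulVec_injective_iff_isUnit.2 hG
  have hε : ε ^ 2 < 1 := by nlinarith
  have hαα : (G *ᵥ α) ⬝ᵥ (G *ᵥ α) = c ^ 2 := by
    rw [hGα, dotProduct_smul, smul_dotProduct, hu, smul_eq_mul, smul_eq_mul]; ring
  refine ⟨?_, (dotProduct_transpose_mul_self_mulVec G α).trans hαα, fun β hβ ↦ ?_⟩
  · rw [hW, ← conjTranspose_eq_transpose_of_trivial]
    exact .conjTranspose_mul_self V (mulVec_injective_iff_isUnit.2 hV_unit)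
  have hAα : (scaleOrthogonal u ε *ᵥ (c • u)) ⬝ᵥ (scaleOrthogonal u ε *ᵥ (c • u)) = c ^ 2 :=
    (scaleOrthogonal_mulVec_dotProduct_self_le_sq hu hε (hGα ▸ hαα).le).2.2 (.inl rfl)
  rw [dotProduct_transpose_mul_self_mulVec] at hβ
  simp only [hobj, hVM, dotProduct_transpose_mul_self_mulVec]
  simp only [← mulVec_mulVec, hGα, hAα]
  obtain ⟨hle, heq⟩ := scaleOrthogonal_mulVec_dotProduct_self_le_sq hu hε hβ
  rw [heq, ← hGα, ← mulVec_neg, hG_inj.eq_iff, hG_inj.eq_iff]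
  exact ⟨hle, .rfl⟩

/-- explicit objective construction used in the proof of Theorem 3.2, part 1.
With `M, G` invertible, `u` a unit vector, `ε ∈ (0,1)`, `c > 0`,
`A := uuᵀ + ε(I − uuᵀ)`, `V := A G M⁻¹`, `W := VᵀV`: the matrix `W` is symmetric positive
definite, `α := c G⁻¹ u` satisfies `αᵀ(GᵀG)α = c²`, and every `β` with `βᵀ(GᵀG)β ≤ c²`
satisfies `βᵀMᵀWMβ ≤ αᵀMᵀWMα`, with equality iff `β = α` or `β = −α`. -/
theorem objective_construction
    (d : ℕ) (hd : 1 ≤ d)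
    (M G : Matrix (Fin d) (Fin d) ℝ) (hM : IsUnit M) (hG : IsUnit G)
    (u : Fin d → ℝ) (hu : euclNorm u = 1)
    (ε : ℝ) (hε0 : 0 < ε) (hε1 : ε < 1)
    (c : ℝ) (hc : 0 < c)
    (A V W : Matrix (Fin d) (Fin d) ℝ)
    (hA : A = vecMulVec u u + ε • ((1 : Matrix (Fin d) (Fin d) ℝ) - vecMulVec u u))
    (hV : V = A * G * M⁻¹)
    (hW : W = Vᵀ * V)
    (α : Fin d → ℝ) (hα : α = c • G⁻¹.mulVec u) :
    W.PosDef ∧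
    α ⬝ᵥ (Gᵀ * G).mulVec α = c ^ 2 ∧
    ∀ β : Fin d → ℝ, β ⬝ᵥ (Gᵀ * G).mulVec β ≤ c ^ 2 →
      β ⬝ᵥ (Mᵀ * W * M).mulVec β ≤ α ⬝ᵥ (Mᵀ * W * M).mulVec α ∧
      (β ⬝ᵥ (Mᵀ * W * M).mulVec β = α ⬝ᵥ (Mᵀ * W * M).mulVec α ↔ β = α ∨ β = -α) :=
  objective_construction_general d M G hM hG u hu ε hε0 hε1 c A V W hA hV hW α hα
end

section
/- Let d, q ≥ 1, let M ∈ ℝ^{q×d}, let V ∈ ℝ^{q×q}, let G ∈ ℝ^{d×d} be invertible, set W := VᵀV and C := GᵀG, and let c > 0. Let s₁ ∈ ℝ^d be a unit vector such that ‖(V M G^{-1})β‖₂ ≤ ‖(V M G^{-1})s₁‖₂ for every unit vector β (such s₁ exists). Then α_opt := c G^{-1} s₁ satisfies α_optᵀ C α_opt = c², for every β ∈ ℝ^d with βᵀCβ ≤ c² one has βᵀMᵀWMβ ≤ α_optᵀ Mᵀ W M α_opt, and α_optᵀ Mᵀ W M α_opt = c² · ‖V M G^{-1}‖², where ‖·‖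 denotes the ℓ₂→ℓ₂ operator norm. -/
open Matrix

/-- The ℓ₂→ℓ₂ operator norm (spectral norm) of a real matrix. -/
noncomputable def l2OpNorm {m n : ℕ} (A : Matrix (Fin m) (Fin n) ℝ) : ℝ :=
  ‖(LinearMap.toContinuousLinearMap (Matrix.toEuclideanLin A))‖

/-!
Substituting `γ = G β` turns the constraint `βᵀCβ ≤ c²` into `‖γ‖ ≤ c` and the objective
`βᵀMᵀWMβ` into `‖A γ‖²` with `A = V M G⁻¹`. Since `s₁` maximizes `‖A γ‖` on the unit
sphere, `‖A s₁‖` is the operator norm of `A`, so `‖A γ‖² ≤ ‖A‖² c²`, with equality at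
`γ = c s₁`, that is at `β = α_opt`.
-/

section EuclNorm

variable {n : ℕ}

lemma euclNorm_eq_norm_toLp (x : Fin n → ℝ) : euclNorm x = ‖WithLp.toLp 2 x‖ := by
  simp [euclNorm, EuclideanSpace.norm_eq, dotProduct, sq]

lemma euclNorm_nonneg (x : Fin n → ℝ) : 0 ≤ euclNorm x :=
  Real.sqrt_nonneg _

lemma euclNorm_sq (x : Fin n → ℝ) : euclNorm x ^ 2 = x ⬝ᵥ x :=
  Real.sq_sqrt (dotProduct_star_self_nonneg x)

lemma euclNorm_smul (a : ℝ) (x : Fin n → ℝ) : euclNorm (a • x) = |a| * euclNorm x := by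
  simp only [euclNorm_eq_norm_toLp, WithLp.toLp_smul, norm_smul, Real.norm_eq_abs]

lemma dotProduct_transpose_mul_self_mulVec_s9 {m : ℕ} (A : Matrix (Fin m) (Fin n) ℝ)
    (x : Fin n → ℝ) : x ⬝ᵥ (Aᵀ * A) *ᵥ x = euclNorm (A *ᵥ x) ^ 2 := by
  rw [euclNorm_sq, ← mulVec_mulVec, dotProduct_mulVec, vecMul_transpose]

end EuclNorm

section L2OpNorm

variable {m n : ℕ}

lemma euclNorm_mulVec_le (A : Matrix (Fin m) (Fin n) ℝ) (x : Fin n → ℝ) :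
    euclNorm (A *ᵥ x) ≤ l2OpNorm A * euclNorm x := by
  rw [euclNorm_eq_norm_toLp, euclNorm_eq_norm_toLp]
  exact (LinearMap.toContinuousLinearMap (toEuclideanLin A)).le_opNorm (WithLp.toLp 2 x)

lemma l2OpNorm_eq_euclNorm_mulVec_of_isMaxOn_sphere (A : Matrix (Fin m) (Fin n) ℝ)
    {s : Fin n → ℝ} (hs : euclNorm s = 1)
    (hmax : ∀ β : Fin n → ℝ, euclNorm β = 1 → euclNorm (A *ᵥ β) ≤ euclNorm (A *ᵥ s)) :
    l2OpNorm A = euclNorm (A *ᵥ s) := by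
  refine le_antisymm ?_ (by simpa [hs] using euclNorm_mulVec_le A s)
  refine ContinuousLinearMap.opNorm_le_of_unit_norm (euclNorm_nonneg _) fun x hx => ?_
  rw [← euclNorm_eq_norm_toLp] at hx ⊢
  exact hmax x.ofLp hx

end L2OpNorm

theorem closed_form_optimal_attack_general
    (d q : ℕ)
    (M : Matrix (Fin q) (Fin d) ℝ) (V : Matrix (Fin q) (Fin q) ℝ)
    (G : Matrix (Fin d) (Fin d) ℝ) (hG : IsUnit G)
    (W : Matrix (Fin q) (Fin q) ℝ) (hW : W = Vᵀ * V)
    (C : Matrix (Fin d) (Fin d) ℝ) (hC : C = Gᵀ * G)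
    (c : ℝ)
    (s₁ : Fin d → ℝ) (hs₁ : euclNorm s₁ = 1)
    (hmax : ∀ β : Fin d → ℝ, euclNorm β = 1 →
      euclNorm ((V * M * G⁻¹).mulVec β) ≤ euclNorm ((V * M * G⁻¹).mulVec s₁))
    (αopt : Fin d → ℝ) (hαopt : αopt = c • G⁻¹.mulVec s₁) :
    αopt ⬝ᵥ C.mulVec αopt = c ^ 2 ∧
    (∀ β : Fin d → ℝ, β ⬝ᵥ C.mulVec β ≤ c ^ 2 →
      β ⬝ᵥ (Mᵀ * W * M).mulVec β ≤ αopt ⬝ᵥ (Mᵀ * W * M).mulVec αopt) ∧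
    αopt ⬝ᵥ (Mᵀ * W * M).mulVec αopt = c ^ 2 * l2OpNorm (V * M * G⁻¹) ^ 2 := by
  set A := V * M * G⁻¹
  have hdet : IsUnit G.det := (isUnit_iff_isUnit_det G).mp hG
  have hGα : G *ᵥ αopt = c • s₁ := by
    rw [hαopt, mulVec_smul, mulVec_mulVec, mul_nonsing_inv G hdet, one_mulVec]
  have hcon : ∀ x, x ⬝ᵥ C *ᵥ x = euclNorm (G *ᵥ x) ^ 2 := fun x => by
    rw [hC, dotProduct_transpose_mul_self_mulVec_s9]
  have hAG : A * G = V * M := nonsing_inv_mul_cancel_right G (V * M) hdet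
  have hMWM : Mᵀ * W * M = (V * M)ᵀ * (V * M) := by
    rw [hW, transpose_mul]
    simp only [Matrix.mul_assoc]
  have hobj : ∀ x, x ⬝ᵥ (Mᵀ * W * M) *ᵥ x = euclNorm (A *ᵥ (G *ᵥ x)) ^ 2 := fun x => by
    rw [mulVec_mulVec, hAG, hMWM, dotProduct_transpose_mul_self_mulVec_s9]
  have hopt : αopt ⬝ᵥ (Mᵀ * W * M) *ᵥ αopt = c ^ 2 * l2OpNorm A ^ 2 := by
    rw [hobj, hGα, mulVec_smul, euclNorm_smul, mul_pow, sq_abs,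
      l2OpNorm_eq_euclNorm_mulVec_of_isMaxOn_sphere A hs₁ hmax]
  refine ⟨by rw [hcon, hGα, euclNorm_smul, hs₁, mul_one, sq_abs], fun β hβ => ?_, hopt⟩
  calc β ⬝ᵥ (Mᵀ * W * M) *ᵥ β = euclNorm (A *ᵥ (G *ᵥ β)) ^ 2 := hobj β
    _ ≤ (l2OpNorm A * euclNorm (G *ᵥ β)) ^ 2 := by
      gcongr
      · exact euclNorm_nonneg _
      · exact euclNorm_mulVec_le A _
    _ = l2OpNorm A ^ 2 * (β ⬝ᵥ C *ᵥ β) := by rw [hcon, mul_pow]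
    _ ≤ l2OpNorm A ^ 2 * c ^ 2 := by gcongr
    _ = αopt ⬝ᵥ (Mᵀ * W * M) *ᵥ αopt := by rw [hopt, mul_comm]

/-- closed-form optimal attack against a linear defender.
With `W := VᵀV`, `C := GᵀG` (`G` invertible), `c > 0`, and `s₁` a top right-singular
vector of `V M G⁻¹` (a unit vector maximizing `‖(V M G⁻¹)β‖₂` over unit vectors `β`),
the attack `α_opt := c G⁻¹ s₁` saturates the constraint (`α_optᵀ C α_opt = c²`), is
optimal (`βᵀMᵀWMβ ≤ α_optᵀMᵀWMα_opt` for all feasible `β`), and its objective value is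
`c² ‖V M G⁻¹‖²` where `‖·‖` is the ℓ₂→ℓ₂ operator norm. -/
theorem closed_form_optimal_attack
    (d q : ℕ) (hd : 1 ≤ d) (hq : 1 ≤ q)
    (M : Matrix (Fin q) (Fin d) ℝ) (V : Matrix (Fin q) (Fin q) ℝ)
    (G : Matrix (Fin d) (Fin d) ℝ) (hG : IsUnit G)
    (W : Matrix (Fin q) (Fin q) ℝ) (hW : W = Vᵀ * V)
    (C : Matrix (Fin d) (Fin d) ℝ) (hC : C = Gᵀ * G)
    (c : ℝ) (hc : 0 < c)
    (s₁ : Fin d → ℝ) (hs₁ : euclNorm s₁ = 1)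
    (hmax : ∀ β : Fin d → ℝ, euclNorm β = 1 →
      euclNorm ((V * M * G⁻¹).mulVec β) ≤ euclNorm ((V * M * G⁻¹).mulVec s₁))
    (αopt : Fin d → ℝ) (hαopt : αopt = c • G⁻¹.mulVec s₁) :
    αopt ⬝ᵥ C.mulVec αopt = c ^ 2 ∧
    (∀ β : Fin d → ℝ, β ⬝ᵥ C.mulVec β ≤ c ^ 2 →
      β ⬝ᵥ (Mᵀ * W * M).mulVec β ≤ αopt ⬝ᵥ (Mᵀ * W * M).mulVec αopt) ∧
    αopt ⬝ᵥ (Mᵀ * W * M).mulVec αopt = c ^ 2 * l2OpNorm (V * M * G⁻¹) ^ 2 :=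
  closed_form_optimal_attack_general d q M V G hG W hW C hC c s₁ hs₁ hmax αopt hαopt
end
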